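/- For the unweighted normalized Laplacian on a locally finite simple graph G and a vertex x, the condition CD(0,∞) at x (i.e., Γ₂(f)(x) ≥ 0 for all finitely supported f) holds if and only if for all f with f(x)=0 one has Σ_{y∼x, z∼y} (d_x/d_y)|2f(y) − f(z)|² + 2(Σ_{y∼x} f(y))² − 2 d_x Σ_{y∼x} f(y)² ≥ 0. -/

import Mathlib

/-!
Γ₂ only sees differences of values, so it is unchanged when a constant is added to `f`, and one
may assume `f x = 0`. Then `Γ₂(f)(x)` only involves the values of `f` at distance one and two
from `x`, and expanding every operator gives the identity `4 d_x² Γ₂(f)(x) = Q(f)`, where `Q` is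
the quadratic form of the statement. If `d_x > 0` this transfers the sign; if `d_x = 0` both
sides vanish.
-/

open Finset

variable {V : Type*}

/-- Unweighted non-normalized graph Laplacian. -/
noncomputable def nnLap (G : SimpleGraph V) [G.LocallyFinite] (f : V → ℝ) (x : V) : ℝ :=
  ∑ y ∈ G.neighborFinset x, (f y - f x)

/-- Unweighted normalized graph Laplacian. -/
noncomputable def nLap (G : SimpleGraph V) [G.LocallyFinite] (f : V → ℝ) (x : V) : ℝ :=
  (∑ y ∈ G.neighborFinset x, (f y - f x)) / (G.degree x : ℝ)

/-- Bakry–Émery carré du champ operator Γ for a Laplacian `L`. -/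
noncomputable def gam (L : (V → ℝ) → V → ℝ) (f g : V → ℝ) (x : V) : ℝ :=
  (L (f * g) x - f x * L g x - g x * L f x) / 2

/-- Iterated carré du champ operator Γ₂ for a Laplacian `L`. -/
noncomputable def gam2 (L : (V → ℝ) → V → ℝ) (f g : V → ℝ) (x : V) : ℝ :=
  (L (gam L f g) x - gam L f (L g) x - gam L (L f) g x) / 2

/-- `G` has no 4-cycle subgraph, equivalently any two distinct vertices have at
most one common neighbor. -/
def C4Free (G : SimpleGraph V) : Prop :=
  ∀ ⦃u v a b : V⦄, u ≠ v → G.Adj u a → G.Adj a v → G.Adj u b → G.Adj b v → a = b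

section CarreDuChamp

theorem gam_comm (L : (V → ℝ) → V → ℝ) (f g : V → ℝ) : gam L f g = gam L g f := by
  funext x
  simp only [gam, mul_comm f g]
  ring

variable {L : (V → ℝ) → V → ℝ} (hL : IsLinearMap ℝ L) (hL_const : ∀ c : ℝ, L (fun _ => c) = 0)
include hL hL_const

theorem map_sub_const (f : V → ℝ) (c : ℝ) : L (f - fun _ => c) = L f := by
  rw [hL.map_sub, hL_const, sub_zero]

theorem gam_sub_const_left (f g : V → ℝ) (c : ℝ) : gam L (f - fun _ => c) g = gam L f g := by
  have hmul : (f - fun _ => c) * g = f * g - c • g := by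
    funext v
    simp only [Pi.mul_apply, Pi.sub_apply, Pi.smul_apply, smul_eq_mul]
    ring
  funext x
  simp only [gam, hmul, hL.map_sub, hL.map_smul, hL_const, Pi.sub_apply, Pi.smul_apply,
    Pi.zero_apply, smul_eq_mul]
  ring

theorem gam2_sub_const (f : V → ℝ) (c : ℝ) :
    gam2 L (f - fun _ => c) (f - fun _ => c) = gam2 L f f := by
  have hgam : ∀ g, gam L (f - fun _ => c) g = gam L f g :=
    fun g => gam_sub_const_left hL hL_const f g c
  have hgam_self : gam L (f - fun _ => c) (f - fun _ => c) = gam L f f := by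
    rw [hgam, gam_comm, hgam, gam_comm]
  funext x
  simp only [gam2, hgam_self, hgam, map_sub_const hL hL_const, gam_comm L (L f)]

end CarreDuChamp

namespace SimpleGraph

variable (G : SimpleGraph V) [G.LocallyFinite]

theorem isLinearMap_nLap : IsLinearMap ℝ (nLap G) where
  map_add f g := by
    funext x
    simp only [nLap, Pi.add_apply, ← add_div, ← sum_add_distrib]
    congr 1
    exact sum_congr rfl fun _ _ => by ring
  map_smul c f := by
    funext x
    simp only [nLap, Pi.smul_apply, smul_eq_mul]
    rw [← mul_div_assoc, mul_sum]
    congr 1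
    exact sum_congr rfl fun _ _ => by ring

theorem nLap_const (c : ℝ) : nLap G (fun _ => c) = 0 := by
  funext x
  simp [nLap]

theorem gam2_nLap_of_degree_eq_zero {x : V} (hx : G.degree x = 0) (f g : V → ℝ) :
    gam2 (nLap G) f g x = 0 := by
  simp [gam2, gam, nLap, hx]

theorem gam_nLap_self (f : V → ℝ) (y : V) :
    gam (nLap G) f f y = (∑ z ∈ G.neighborFinset y, (f z - f y) ^ 2) / (2 * G.degree y) := by
  have hsum : ∑ z ∈ G.neighborFinset y, ((f * f) z - (f * f) y)
      - 2 * f y * ∑ z ∈ G.neighborFinset y, (f z - f y)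
      = ∑ z ∈ G.neighborFinset y, (f z - f y) ^ 2 := by
    rw [mul_sum, ← sum_sub_distrib]
    exact sum_congr rfl fun z _ => by simp only [Pi.mul_apply]; ring
  rw [gam, nLap, nLap, ← hsum]
  ring

theorem sum_div_degree_mul_sq_eq {y : V} (hy : G.degree y ≠ 0) (f : V → ℝ) (c : ℝ) :
    ∑ z ∈ G.neighborFinset y, c / G.degree y * (2 * f y - f z) ^ 2
      = c * (2 * gam (nLap G) f f y - 2 * (f y * nLap G f y) + f y ^ 2) := by
  have hsq : ∀ z, (2 * f y - f z) ^ 2 = (f z - f y) ^ 2 - 2 * f y * (f z - f y) + f y ^ 2 :=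
    fun z => by ring
  simp only [hsq, ← mul_sum, sum_add_distrib, sum_sub_distrib, sum_const,
    card_neighborFinset_eq_degree, nsmul_eq_mul, gam_nLap_self, nLap]
  field_simp

noncomputable def cdForm (x : V) (f : V → ℝ) : ℝ :=
  ∑ y ∈ G.neighborFinset x, ∑ z ∈ G.neighborFinset y,
      ((G.degree x : ℝ) / (G.degree y : ℝ)) * (2 * f y - f z) ^ 2
    + 2 * (∑ y ∈ G.neighborFinset x, f y) ^ 2
    - 2 * (G.degree x : ℝ) * ∑ y ∈ G.neighborFinset x, (f y) ^ 2

variable {G}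

variable {x : V} {f : V → ℝ}

theorem nLap_apply_of_eq_zero (hfx : f x = 0) :
    nLap G f x = (∑ y ∈ G.neighborFinset x, f y) / G.degree x := by
  simp only [nLap, hfx, sub_zero]

theorem gam_nLap_self_apply_of_eq_zero (hfx : f x = 0) :
    gam (nLap G) f f x = (∑ y ∈ G.neighborFinset x, f y ^ 2) / (2 * G.degree x) := by
  simp only [gam_nLap_self, hfx, sub_zero]

theorem gam_nLap_nLap_apply_of_eq_zero (hfx : f x = 0) :
    gam (nLap G) f (nLap G f) x
      = ((∑ y ∈ G.neighborFinset x, f y * nLap G f y) / G.degree x - nLap G f x ^ 2) / 2 := by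
  have hprod : (f * nLap G f) x = 0 := by simp [hfx]
  rw [gam, nLap_apply_of_eq_zero hprod, hfx, zero_mul, sub_zero]
  simp only [Pi.mul_apply]
  ring

theorem four_mul_sq_degree_mul_gam2_nLap (hfx : f x = 0) :
    4 * (G.degree x : ℝ) ^ 2 * gam2 (nLap G) f f x = cdForm G x f := by
  rcases eq_or_ne (G.degree x) 0 with hx | hx
  · simp [cdForm, (G.degree_eq_zero x).mp hx]
  have hinner : ∀ y ∈ G.neighborFinset x, ∑ z ∈ G.neighborFinset y,
      (G.degree x : ℝ) / G.degree y * (2 * f y - f z) ^ 2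
        = G.degree x * (2 * gam (nLap G) f f y - 2 * (f y * nLap G f y) + f y ^ 2) :=
    fun y hy => sum_div_degree_mul_sq_eq G ((G.mem_neighborFinset x y).mp hy).degree_pos_right.ne' f _
  have hLgam : nLap G (gam (nLap G) f f) x
      = (∑ y ∈ G.neighborFinset x, gam (nLap G) f f y) / G.degree x
        - gam (nLap G) f f x := by
    simp only [nLap, sum_sub_distrib, sum_const, card_neighborFinset_eq_degree, nsmul_eq_mul]
    field_simp
  rw [cdForm, sum_congr rfl hinner, gam2, hLgam, gam_comm (nLap G) (nLap G f),
    gam_nLap_nLap_apply_of_eq_zero hfx, gam_nLap_self_apply_of_eq_zero hfx,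
    nLap_apply_of_eq_zero hfx, ← mul_sum, sum_add_distrib, sum_sub_distrib, ← mul_sum, ← mul_sum]
  field_simp
  ring

end SimpleGraph

theorem stmt_8_general (G : SimpleGraph V) [G.LocallyFinite] (x : V) :
    (∀ f : V → ℝ, 0 ≤ gam2 (nLap G) f f x) ↔
      (∀ f : V → ℝ, f x = 0 →
        0 ≤ ∑ y ∈ G.neighborFinset x, ∑ z ∈ G.neighborFinset y,
              ((G.degree x : ℝ) / (G.degree y : ℝ)) * (2 * f y - f z) ^ 2
          + 2 * (∑ y ∈ G.neighborFinset x, f y) ^ 2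
          - 2 * (G.degree x : ℝ) * ∑ y ∈ G.neighborFinset x, (f y) ^ 2) := by
  refine ⟨fun h f hfx => ?_, fun h f => ?_⟩
  · change 0 ≤ G.cdForm x f
    rw [← G.four_mul_sq_degree_mul_gam2_nLap hfx]
    exact mul_nonneg (by positivity) (h f)
  · have hshift := congrFun (gam2_sub_const G.isLinearMap_nLap G.nLap_const f (f x)) x
    have hgx : (f - fun _ => f x : V → ℝ) x = 0 := sub_self _
    rcases eq_or_ne (G.degree x) 0 with hx | hx
    · exact (G.gam2_nLap_of_degree_eq_zero hx f f).ge
    have hQ : 0 ≤ G.cdForm x _ := h _ hgx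
    rw [← G.four_mul_sq_degree_mul_gam2_nLap hgx, hshift] at hQ
    exact nonneg_of_mul_nonneg_right hQ (by positivity)

/-- For the unweighted normalized Laplacian, `CD(0,∞)` at `x` holds iff for all
`f` vanishing at `x` the stated quadratic expression is nonnegative. -/
theorem stmt_8 (G : SimpleGraph V) [G.LocallyFinite]
    (hd : ∀ v : V, 0 < G.degree v) (x : V) :
    (∀ f : V → ℝ, 0 ≤ gam2 (nLap G) f f x) ↔
      (∀ f : V → ℝ, f x = 0 →
        0 ≤ ∑ y ∈ G.neighborFinset x, ∑ z ∈ G.neighborFinset y,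
              ((G.degree x : ℝ) / (G.degree y : ℝ)) * (2 * f y - f z) ^ 2
          + 2 * (∑ y ∈ G.neighborFinset x, f y) ^ 2
          - 2 * (G.degree x : ℝ) * ∑ y ∈ G.neighborFinset x, (f y) ^ 2) :=
  stmt_8_general G x
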